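/- For α ∈ (0,1) and m ∈ ℕ with m ≥ 1, CF_a D^α (t−a)^m = (m/α)(t−a)^{m−1} + (m!/α) Σ_{k=0}^{m−2} (−(1−α)/α)^{m−k−1} (t−a)^k / k! − (m!/α)(−(1−α)/α)^{m−1} exp(−α(t−a)/(1−α)) for t ≥ a. -/

import Mathlib

open MeasureTheory Filter Real Set intervalIntegral

/-- Caputo–Fabrizio fractional derivative of order `α` with base point `a`,
expressed in terms of the derivative `f'` of the function. -/
noncomputable def cfD (α a : ℝ) (f' : ℝ → ℝ) (t : ℝ) : ℝ :=
  (1 / (1 - α)) * ∫ τ in a..t, f' τ * Real.exp (-(α * (t - τ)) / (1 - α))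

lemma expDeriv (α t : ℝ) (hα0 : α ≠ 0) (hα1 : (1:ℝ) - α ≠ 0) (x : ℝ) :
    HasDerivAt (fun τ => ((1 - α) / α) * Real.exp (-(α * (t - τ)) / (1 - α)))
      (Real.exp (-(α * (t - x)) / (1 - α))) x := by
  have h1 : HasDerivAt (fun τ : ℝ => -(α * (t - τ)) / (1 - α)) (α / (1 - α)) x := by
    have h0 : HasDerivAt (fun τ : ℝ => t - τ) (-1) x := (hasDerivAt_id x).const_sub t
    have h2 := ((h0.const_mul α).neg).div_const (1 - α)
    refine h2.congr_deriv ?_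
    ring
  have h3 := (h1.exp).const_mul ((1 - α) / α)
  refine h3.congr_deriv ?_
  field_simp

lemma expCont (α a t : ℝ) :
    IntervalIntegrable (fun τ => Real.exp (-(α * (t - τ)) / (1 - α))) volume a t := by
  apply Continuous.intervalIntegrable
  fun_prop

lemma cfD_rec (α a : ℝ) (hα : α ∈ Set.Ioo (0:ℝ) 1) (n : ℕ) (hn : 1 ≤ n) (t : ℝ) :
    cfD α a (fun τ => ((n:ℝ) + 1) * (τ - a) ^ n) t
      = ((n:ℝ) + 1) / α * (t - a) ^ n
        - ((n:ℝ) + 1) * (1 - α) / α * cfD α a (fun τ => (n:ℝ) * (τ - a) ^ (n - 1)) t := by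
  obtain ⟨hα0, hα1⟩ := hα
  have hαne : α ≠ 0 := ne_of_gt hα0
  have h1ne : (1:ℝ) - α ≠ 0 := by linarith
  have hu : ∀ x ∈ Set.uIcc a t, HasDerivAt (fun τ : ℝ => (τ - a) ^ n)
      ((n:ℝ) * (x - a) ^ (n - 1)) x := by
    intro x _
    have h0 : HasDerivAt (fun τ : ℝ => τ - a) 1 x := (hasDerivAt_id x).sub_const a
    simpa using h0.fun_pow n
  have hv : ∀ x ∈ Set.uIcc a t, HasDerivAt
      (fun τ => ((1 - α) / α) * Real.exp (-(α * (t - τ)) / (1 - α)))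
      (Real.exp (-(α * (t - x)) / (1 - α))) x := fun x _ => expDeriv α t hαne h1ne x
  have hu' : IntervalIntegrable (fun x : ℝ => (n:ℝ) * (x - a) ^ (n - 1)) volume a t := by
    apply Continuous.intervalIntegrable; fun_prop
  have key := intervalIntegral.integral_mul_deriv_eq_deriv_mul hu hv hu' (expCont α a t)
  have e1 : ∫ τ in a..t, ((n:ℝ) + 1) * (τ - a) ^ n * Real.exp (-(α * (t - τ)) / (1 - α))
      = ((n:ℝ) + 1) * ∫ τ in a..t, (τ - a) ^ n * Real.exp (-(α * (t - τ)) / (1 - α)) := by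
    rw [← intervalIntegral.integral_const_mul]
    congr 1; ext τ; ring
  have e3 : ∫ x in a..t, ((n:ℝ) * (x - a) ^ (n - 1))
        * (((1 - α) / α) * Real.exp (-(α * (t - x)) / (1 - α)))
      = ((n:ℝ) * ((1 - α) / α))
        * ∫ x in a..t, (x - a) ^ (n - 1) * Real.exp (-(α * (t - x)) / (1 - α)) := by
    rw [← intervalIntegral.integral_const_mul]
    congr 1; ext x; ring
  have e2 : ∫ τ in a..t, (n:ℝ) * (τ - a) ^ (n - 1) * Real.exp (-(α * (t - τ)) / (1 - α))
      = (n:ℝ) * ∫ τ in a..t, (τ - a) ^ (n - 1) * Real.exp (-(α * (t - τ)) / (1 - α)) := by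
    rw [← intervalIntegral.integral_const_mul]
    congr 1; ext τ; ring
  have hzero : ((a:ℝ) - a) ^ n = 0 := by
    rw [sub_self]
    exact zero_pow (by omega)
  simp only [cfD, e1, e2]
  rw [key, e3, hzero]
  rw [sub_self t, mul_zero, neg_zero, zero_div, Real.exp_zero]
  set K := ∫ x in a..t, (x - a) ^ (n - 1) * Real.exp (-(α * (t - x)) / (1 - α)) with hK
  field_simp
  ring

theorem stmt9 (α a : ℝ) (hα : α ∈ Set.Ioo (0:ℝ) 1) (m : ℕ) (hm : 1 ≤ m)
    (t : ℝ) (ht : a ≤ t) :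
    cfD α a (fun τ => (m : ℝ) * (τ - a) ^ (m - 1)) t
      = ((m : ℝ) / α) * (t - a) ^ (m - 1)
        + ((m.factorial : ℝ) / α) * ∑ k ∈ Finset.range (m - 1),
            (-(1 - α) / α) ^ (m - k - 1) * (t - a) ^ k / (k.factorial : ℝ)
        - ((m.factorial : ℝ) / α) * (-(1 - α) / α) ^ (m - 1)
            * Real.exp (-(α * (t - a)) / (1 - α)) := by
  obtain ⟨hα0, hα1⟩ := hα
  have hαne : α ≠ 0 := ne_of_gt hα0
  have h1ne : (1:ℝ) - α ≠ 0 := by linarith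
  induction m, hm using Nat.le_induction with
  | base =>
    have hInt : (∫ τ in a..t, Real.exp (-(α * (t - τ)) / (1 - α)))
        = ((1 - α) / α) * Real.exp (-(α * (t - t)) / (1 - α))
          - ((1 - α) / α) * Real.exp (-(α * (t - a)) / (1 - α)) :=
      intervalIntegral.integral_eq_sub_of_hasDerivAt
        (fun x _ => expDeriv α t hαne h1ne x) (expCont α a t)
    rw [sub_self t, mul_zero, neg_zero, zero_div, Real.exp_zero, mul_one] at hInt
    simp only [cfD, Nat.cast_one, one_mul, Nat.sub_self, pow_zero, Nat.factorial_one,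
      Finset.range_zero, Finset.sum_empty, mul_zero, add_zero, mul_one]
    rw [hInt]
    field_simp
  | succ n hn ih =>
    have hrec := cfD_rec α a ⟨hα0, hα1⟩ n hn t
    obtain ⟨p, rfl⟩ : ∃ p, n = p + 1 := ⟨n - 1, (Nat.succ_pred_eq_of_pos hn).symm⟩
    simp only [Nat.add_sub_cancel] at hrec ih ⊢
    push_cast [Nat.factorial_succ] at hrec ih ⊢
    rw [hrec, ih]
    have hsplit := Finset.sum_range_succ
      (fun k => (-(1 - α) / α) ^ (p + 1 + 1 - k - 1) * (t - a) ^ k / (k.factorial : ℝ)) p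
    rw [hsplit]
    have h1 : ∀ k ∈ Finset.range p,
        (-(1 - α) / α) ^ (p + 1 + 1 - k - 1) * (t - a) ^ k / (k.factorial : ℝ)
          = (-(1 - α) / α) * ((-(1 - α) / α) ^ (p + 1 - k - 1) * (t - a) ^ k / (k.factorial : ℝ)) := by
      intro k hk
      rw [Finset.mem_range] at hk
      have hk1 : p + 1 + 1 - k - 1 = (p + 1 - k - 1) + 1 := by omega
      rw [hk1, pow_succ]
      ring
    rw [Finset.sum_congr rfl h1, ← Finset.mul_sum]
    have hk2 : p + 1 + 1 - p - 1 = 1 := by omega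
    rw [hk2, pow_one]
    have hk3 : (-(1 - α) / α) ^ (p + 1) = (-(1 - α) / α) ^ p * (-(1 - α) / α) := pow_succ _ _
    rw [hk3]
    push_cast [Nat.factorial_succ]
    have hfac : ((p.factorial : ℝ)) ≠ 0 := Nat.cast_ne_zero.mpr p.factorial_ne_zero
    field_simp
    ring
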